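/- Let H be a normal sublocal group of G with normalizing neighborhood V, and let W be a symmetric open neighborhood of 1 with W ⊆ U₆ and W⁶ ⊆ V. Then: (1) the relation E_H on W defined by E_H(x,y) ⟺ x⁻¹y ∈ H is an equivalence relation on W; (2) for x,y ∈ W, E_H(x,y) holds if and only if (xH) ∩ W = (yH) ∩ W, and the E_H-equivalence class of x equals (xH) ∩ W. -/

import Mathlib

/-! Since `W⁶ ⊆ V`, every product of at most six elements of `W` is defined and lies in `V`
(pad it with copies of `1`), so the sublocal group axioms apply to the products that occur:
`(x⁻¹y)⁻¹ = y⁻¹x` gives symmetry, `(x⁻¹y)(y⁻¹z) = x⁻¹((yy⁻¹)z) = x⁻¹z` transitivity, and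
`z = x(x⁻¹z)` identifies the class of `x` with `xH ∩ W`. -/

open scoped Topology Manifold ENNReal

/-- A local group in the sense of Goldbring's "Hilbert's Fifth Problem for Local Groups":
a Hausdorff-intended topological space `G` with a distinguished element `one`, a partial
inversion `inv` defined (i.e. meaningful) on the open set `Lambda`, and a partial product
`mul` meaningful on the open set `Omega`. -/
structure LocalGroup (G : Type*) [TopologicalSpace G] where
  one : G
  Lambda : Set G
  Omega : Set (G × G)
  inv : G → G
  mul : G → G → G
  isOpen_Lambda : IsOpen Lambda
  isOpen_Omega : IsOpen Omega
  one_mem_Lambda : one ∈ Lambda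
  pair_one_left : ∀ x : G, (one, x) ∈ Omega
  pair_one_right : ∀ x : G, (x, one) ∈ Omega
  continuousOn_inv : ContinuousOn inv Lambda
  continuousOn_mul : ContinuousOn (fun q : G × G => mul q.1 q.2) Omega
  one_mul : ∀ x : G, mul one x = x
  mul_one : ∀ x : G, mul x one = x
  mem_inv_right : ∀ x ∈ Lambda, (x, inv x) ∈ Omega
  mem_inv_left : ∀ x ∈ Lambda, (inv x, x) ∈ Omega
  mul_inv_self : ∀ x ∈ Lambda, mul x (inv x) = one
  inv_mul_self : ∀ x ∈ Lambda, mul (inv x) x = one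
  assoc : ∀ x y z : G, (x, y) ∈ Omega → (y, z) ∈ Omega → (mul x y, z) ∈ Omega →
    (x, mul y z) ∈ Omega → mul (mul x y) z = mul x (mul y z)

namespace LocalGroup

variable {G : Type*} {G' : Type*} [TopologicalSpace G] [TopologicalSpace G']

/-- The standing conventions of the paper: `Λ = G`, and whenever `(g,h) ∈ Ω` also
`(h⁻¹, g⁻¹) ∈ Ω` with `(gh)⁻¹ = h⁻¹g⁻¹`. -/
def Std (L : LocalGroup G) : Prop :=
  L.Lambda = Set.univ ∧
    ∀ g h : G, (g, h) ∈ L.Omega →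
      (L.inv h, L.inv g) ∈ L.Omega ∧ L.inv (L.mul g h) = L.mul (L.inv h) (L.inv g)

/-- A symmetric subset: contained in the domain of inversion and stable under it. -/
def IsSymmetric (L : LocalGroup G) (S : Set G) : Prop :=
  S ⊆ L.Lambda ∧ L.inv '' S = S

/-- A subgroup of a local group. -/
def IsSubgroup (L : LocalGroup G) (H : Set G) : Prop :=
  L.one ∈ H ∧ H ⊆ L.Lambda ∧ (∀ x ∈ H, ∀ y ∈ H, (x, y) ∈ L.Omega) ∧
    (∀ x ∈ H, L.inv x ∈ H) ∧ ∀ x ∈ H, ∀ y ∈ H, L.mul x y ∈ H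

/-- No small subgroups. -/
def NSS (L : LocalGroup G) : Prop :=
  ∃ U ∈ 𝓝 L.one, ∀ H : Set G, L.IsSubgroup H → H ⊆ U → H = {L.one}

/-- No small connected subgroups. -/
def NSCS (L : LocalGroup G) : Prop :=
  ∃ U ∈ 𝓝 L.one, ∀ H : Set G, L.IsSubgroup H → IsConnected H → H ⊆ U → H = {L.one}

/-- `(a₁, …, aₙ)` represents `b`: all ways of multiplying the list are defined and equal `b`.
By convention the empty list represents `one`. -/
def Represents (L : LocalGroup G) : List G → G → Prop
  | [], b => b = L.one
  | [a], b => b = a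
  | a :: c :: l, b =>
      ∀ i : ℕ, 1 ≤ i → i < (a :: c :: l).length →
        ∃ b₁ b₂ : G, L.Represents ((a :: c :: l).take i) b₁ ∧
          L.Represents ((a :: c :: l).drop i) b₂ ∧ (b₁, b₂) ∈ L.Omega ∧ L.mul b₁ b₂ = b
termination_by l => l.length
decreasing_by
  all_goals simp only [List.length_cons, List.length_take, List.length_drop] at *
  all_goals omega

/-- `A^n`: all products of `n` elements of `A` (only meaningful when such products are defined). -/
def setPow (L : LocalGroup G) (A : Set G) (n : ℕ) : Set G :=
  {b | ∃ l : List G, l.length = n ∧ (∀ a ∈ l, a ∈ A) ∧ L.Represents l b}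

/-- A chain `U₁ ⊇ U₂ ⊇ ⋯` of symmetric open neighborhoods of `1` such that products of `n`
elements of `Uₙ` are defined (the sets `𝒰ₙ` of the paper). -/
def IsProdChain (L : LocalGroup G) (U : ℕ → Set G) : Prop :=
  ∀ n : ℕ, 1 ≤ n →
    IsOpen (U n) ∧ L.one ∈ U n ∧ L.IsSymmetric (U n) ∧ U (n + 1) ⊆ U n ∧
      ∀ l : List G, l.length = n → (∀ a ∈ l, a ∈ U n) → ∃ b, L.Represents l b

/-- `a^k` is defined and equal to `b`, for `k : ℤ` (with `a^(-n) := (a⁻¹)^n`). -/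
def zpowRep (L : LocalGroup G) (a : G) : ℤ → G → Prop
  | Int.ofNat n, b => L.Represents (List.replicate n a) b
  | Int.negSucc n, b => L.Represents (List.replicate (n + 1) (L.inv a)) b

/-- A special neighborhood (relative to a product chain `U`): a compact symmetric
neighborhood of `1` contained in `U 2`, containing no nontrivial subgroup, on which
squaring is injective. -/
def IsSpecialNbhd (L : LocalGroup G) (U : ℕ → Set G) (SU : Set G) : Prop :=
  IsCompact SU ∧ SU ∈ 𝓝 L.one ∧ L.IsSymmetric SU ∧ SU ⊆ U 2 ∧
    (∀ H : Set G, L.IsSubgroup H → H ⊆ SU → H = {L.one}) ∧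
    ∀ x ∈ SU, ∀ y ∈ SU, L.mul x x = L.mul y y → x = y

/-- `Λ_U` for the restriction `G|U`. -/
def restLambda (L : LocalGroup G) (U : Set G) : Set G := L.Lambda ∩ U ∩ L.inv ⁻¹' U

/-- `Ω_U` for the restriction `G|U`. -/
def restOmega (L : LocalGroup G) (U : Set G) : Set (G × G) :=
  {q | q ∈ L.Omega ∧ q.1 ∈ U ∧ q.2 ∈ U ∧ L.mul q.1 q.2 ∈ U}

/-- A morphism of local groups `L → L'`. -/
def IsMorphism (L : LocalGroup G) (L' : LocalGroup G') (f : G → G') : Prop :=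
  Continuous f ∧ f L.one = L'.one ∧
    (∀ x ∈ L.Lambda, f x ∈ L'.Lambda ∧ f (L.inv x) = L'.inv (f x)) ∧
    ∀ x y : G, (x, y) ∈ L.Omega → ((f x, f y) ∈ L'.Omega ∧ f (L.mul x y) = L'.mul (f x) (f y))

/-- `f` is a morphism of local groups `G|U → G'|U'` between restrictions. -/
def IsRestMorphism (L : LocalGroup G) (L' : LocalGroup G') (U : Set G) (U' : Set G')
    (f : G → G') : Prop :=
  ContinuousOn f U ∧ Set.MapsTo f U U' ∧ f L.one = L'.one ∧
    (∀ x ∈ L.restLambda U, f x ∈ L'.restLambda U' ∧ f (L.inv x) = L'.inv (f x)) ∧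
    ∀ x y : G, (x, y) ∈ L.restOmega U →
      ((f x, f y) ∈ L'.restOmega U' ∧ f (L.mul x y) = L'.mul (f x) (f y))

/-- Local isomorphism: a homeomorphism between open neighborhoods of the identities which
is a morphism of restrictions in both directions. -/
def LocallyIsomorphic (L : LocalGroup G) (L' : LocalGroup G') : Prop :=
  ∃ (U : Set G) (U' : Set G') (f : G → G') (g : G' → G),
    IsOpen U ∧ L.one ∈ U ∧ IsOpen U' ∧ L'.one ∈ U' ∧
      Set.BijOn f U U' ∧ (∀ x ∈ U, g (f x) = x) ∧ (∀ y ∈ U', f (g y) = y) ∧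
      L.IsRestMorphism L' U U' f ∧ L'.IsRestMorphism L U' U g

/-- A topological group regarded as a local group with `Λ = G` and `Ω = G × G`. -/
def ofGroup (H : Type*) [TopologicalSpace H] [Group H] [IsTopologicalGroup H] : LocalGroup H where
  one := 1
  Lambda := Set.univ
  Omega := Set.univ
  inv := fun x => x⁻¹
  mul := fun x y => x * y
  isOpen_Lambda := isOpen_univ
  isOpen_Omega := isOpen_univ
  one_mem_Lambda := trivial
  pair_one_left := fun _ => trivial
  pair_one_right := fun _ => trivial
  continuousOn_inv := continuous_inv.continuousOn
  continuousOn_mul := (continuous_fst.mul continuous_snd).continuousOn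
  one_mul := fun x => _root_.one_mul x
  mul_one := fun x => _root_.mul_one x
  mem_inv_right := fun _ _ => trivial
  mem_inv_left := fun _ _ => trivial
  mul_inv_self := fun x _ => mul_inv_cancel x
  inv_mul_self := fun x _ => inv_mul_cancel x
  assoc := fun x y z _ _ _ _ => mul_assoc x y z

/-- A bundled (finite-dimensional, real) Lie group in the Mathlib sense. -/
structure BundledLieGroup : Type 1 where
  n : ℕ
  carrier : Type
  [ts : TopologicalSpace carrier]
  [t2 : T2Space carrier]
  [grp : Group carrier]
  [tg : IsTopologicalGroup carrier]
  [cs : ChartedSpace (EuclideanSpace ℝ (Fin n)) carrier]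
  [lie : LieGroup (𝓡 n) (⊤ : ℕ∞) carrier]

/-- `L` is locally isomorphic to (the local group underlying) a Lie group. -/
def IsLieLocallyIsomorphic (L : LocalGroup G) : Prop :=
  ∃ B : BundledLieGroup,
    letI := B.ts; letI := B.grp; letI := B.tg
    L.LocallyIsomorphic (ofGroup B.carrier)

/-- A local one-parameter subgroup of `L`, with domain `(-r, r)` (where `r ∈ (0,∞]`). -/
structure LocalOnePS (L : LocalGroup G) where
  r : ℝ≥0∞
  r_pos : 0 < r
  toFun : ℝ → G
  mem_Lambda : ∀ t : ℝ, ENNReal.ofReal |t| < r → toFun t ∈ L.Lambda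
  continuousOn : ContinuousOn toFun {t : ℝ | ENNReal.ofReal |t| < r}
  add : ∀ s t : ℝ, ENNReal.ofReal |s| < r → ENNReal.ofReal |t| < r →
    ENNReal.ofReal |s + t| < r →
      (toFun s, toFun t) ∈ L.Omega ∧ toFun (s + t) = L.mul (toFun s) (toFun t)

variable {L : LocalGroup G}

/-- Equivalence (equality of germs at 0) of local one-parameter subgroups. -/
def OnePSEquiv (X Y : LocalOnePS L) : Prop :=
  ∃ s : ℝ, 0 < s ∧ ENNReal.ofReal s < X.r ∧ ENNReal.ofReal s < Y.r ∧
    ∀ t : ℝ, |t| < s → X.toFun t = Y.toFun t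

theorem onePS_exists_small (X : LocalOnePS L) : ∃ s : ℝ, 0 < s ∧ ENNReal.ofReal s < X.r := by
  rcases eq_or_ne X.r ⊤ with h | h
  · exact ⟨1, one_pos, by simp [h]⟩
  · have h0 : X.r ≠ 0 := ne_of_gt X.r_pos
    have htr : 0 < X.r.toReal := ENNReal.toReal_pos h0 h
    refine ⟨X.r.toReal / 2, by linarith, ?_⟩
    rw [ENNReal.ofReal_lt_iff_lt_toReal (by linarith) h]
    linarith

instance onePSSetoid (L : LocalGroup G) : Setoid (LocalOnePS L) where
  r := OnePSEquiv
  iseqv := by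
    constructor
    · intro X
      obtain ⟨s, hs, hsr⟩ := onePS_exists_small X
      exact ⟨s, hs, hsr, hsr, fun _ _ => rfl⟩
    · rintro X Y ⟨s, hs, h1, h2, h3⟩
      exact ⟨s, hs, h2, h1, fun t ht => (h3 t ht).symm⟩
    · rintro X Y Z ⟨s1, hs1, hX1, hY1, hag1⟩ ⟨s2, hs2, hY2, hZ2, hag2⟩
      refine ⟨min s1 s2, lt_min hs1 hs2, ?_, ?_, fun t ht => ?_⟩
      · exact lt_of_le_of_lt (ENNReal.ofReal_le_ofReal (min_le_left _ _)) hX1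
      · exact lt_of_le_of_lt (ENNReal.ofReal_le_ofReal (min_le_right _ _)) hZ2
      · rw [hag1 t (lt_of_lt_of_le ht (min_le_left _ _)),
          hag2 t (lt_of_lt_of_le ht (min_le_right _ _))]

/-- `L(G)`: the set of germs at `0` of local one-parameter subgroups of `L`. -/
abbrev LGQuot (L : LocalGroup G) := Quotient (onePSSetoid L)

/-- The trivial local one-parameter subgroup `O`. -/
noncomputable def constOnePS (L : LocalGroup G) : LocalOnePS L where
  r := ⊤
  r_pos := by simp
  toFun := fun _ => L.one
  mem_Lambda := fun _ _ => L.one_mem_Lambda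
  continuousOn := continuousOn_const
  add := fun s t _ _ _ => ⟨L.pair_one_left L.one, (L.one_mul L.one).symm⟩

/-- The domain of a germ of local one-parameter subgroups: the union of the domains of its
representatives. -/
def germDomain (L : LocalGroup G) (X : LGQuot L) : Set ℝ :=
  {t | ∃ Y : LocalOnePS L, ⟦Y⟧ = X ∧ ENNReal.ofReal |t| < Y.r}

/-- Evaluation of a germ at a point of its domain (junk value outside). This is
well defined, i.e. independent of the choice of representative, by the basic theory
of local one-parameter subgroups. -/
noncomputable def germEval (L : LocalGroup G) (X : LGQuot L) (t : ℝ) : G := by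
  classical exact if h : ∃ Y : LocalOnePS L, ⟦Y⟧ = X ∧ ENNReal.ofReal |t| < Y.r then h.choose.toFun t
  else L.one

/-- The topology on `L(G)` generated by the subbasic sets `B_{C,U}` for `C ⊆ (-2,2)`
compact and `U ⊆ G` open. -/
instance germTopology (L : LocalGroup G) : TopologicalSpace (LGQuot L) :=
  TopologicalSpace.generateFrom
    {S | ∃ (C : Set ℝ) (U : Set G), IsCompact C ∧ C ⊆ Set.Ioo (-2 : ℝ) 2 ∧ IsOpen U ∧
      S = {X : LGQuot L | C ⊆ germDomain L X ∧ ∀ t ∈ C, germEval L X t ∈ U}}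

/-- A sublocal group `H` of `L`, with associated neighborhood `V`. -/
def IsSublocalGroup (L : LocalGroup G) (H V : Set G) : Prop :=
  L.one ∈ H ∧ IsOpen V ∧ L.one ∈ V ∧ H ⊆ V ∧ (∀ x ∈ closure H, x ∈ V → x ∈ H) ∧
    (∀ x ∈ H, x ∈ L.Lambda → L.inv x ∈ V → L.inv x ∈ H) ∧
    ∀ x ∈ H, ∀ y ∈ H, (x, y) ∈ L.Omega → L.mul x y ∈ V → L.mul x y ∈ H

/-- A normal sublocal group `H` of `L`, with normalizing neighborhood `V`. -/
def IsNormalSublocalGroup (L : LocalGroup G) (H V : Set G) : Prop :=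
  L.IsSublocalGroup H V ∧ L.IsSymmetric V ∧
    ∀ y ∈ V, ∀ x ∈ H, ∀ b : G, L.Represents [y, x, L.inv y] b → b ∈ V → b ∈ H

/-- The coset relation `E_H` on `W`. -/
def quotRel (L : LocalGroup G) (H W : Set G) : ↥W → ↥W → Prop :=
  fun x y => L.mul (L.inv ↑x) ↑y ∈ H

/-- The local coset space `W/E_H`, with the quotient topology. -/
abbrev QuotCarrier (L : LocalGroup G) (H W : Set G) := Quot (L.quotRel H W)

/-- `Q` is the local quotient group structure `(G/H)_W` on `W/E_H`. -/
def IsQuotStructure (L : LocalGroup G) (H W : Set G) (h1W : L.one ∈ W)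
    (Q : LocalGroup (L.QuotCarrier H W)) : Prop :=
  Q.one = Quot.mk (L.quotRel H W) ⟨L.one, h1W⟩ ∧
    Q.Lambda = Set.univ ∧
    (∀ (x : ↥W) (hx : L.inv ↑x ∈ W),
      Q.inv (Quot.mk (L.quotRel H W) x) = Quot.mk (L.quotRel H W) ⟨L.inv ↑x, hx⟩) ∧
    Q.Omega = {q | ∃ x y : ↥W, ((x : G), (y : G)) ∈ L.Omega ∧ L.mul ↑x ↑y ∈ W ∧
      q = (Quot.mk (L.quotRel H W) x, Quot.mk (L.quotRel H W) y)} ∧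
    ∀ (x y : ↥W) (_ : ((x : G), (y : G)) ∈ L.Omega) (hm : L.mul ↑x ↑y ∈ W),
      Q.mul (Quot.mk (L.quotRel H W) x) (Quot.mk (L.quotRel H W) y) =
        Quot.mk (L.quotRel H W) ⟨L.mul ↑x ↑y, hm⟩

/-- The sup-norm of a real-valued function. -/
noncomputable def supNorm (f : G → ℝ) : ℝ := ⨆ x : G, |f x|

/-- `W²` = the set of products of two elements of `W`. -/
def sqSet (L : LocalGroup G) (W : Set G) : Set G :=
  {z | ∃ a ∈ W, ∃ b ∈ W, (a, b) ∈ L.Omega ∧ L.mul a b = z}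

/-- The (left-translation) action `a · f` of `a` on functions supported in `W`:
`(a·f)(x) = f (a⁻¹ x)` for `x ∈ W²` and `0` otherwise. -/
noncomputable def act (L : LocalGroup G) (W : Set G) (a : G) (f : G → ℝ) : G → ℝ := by
  classical exact fun x => if x ∈ L.sqSet W then f (L.mul (L.inv a) x) else 0

/-- `ord(x) ≥ n` relative to the special neighborhood `SU`: all powers `x^k`, `|k| ≤ n`,
are defined and lie in `SU`. -/
def ordGE (L : LocalGroup G) (SU : Set G) (n : ℕ) : Set G :=
  {x | ∀ k : ℤ, k.natAbs ≤ n → ∃ b : G, L.zpowRep x k b ∧ b ∈ SU}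

end LocalGroup

open LocalGroup

theorem rel_iff_setOf_eq_setOf {α : Type*} {W : Set α} {r : α → α → Prop}
    (hrefl : ∀ x ∈ W, r x x) (hsymm : ∀ x ∈ W, ∀ y ∈ W, r x y → r y x)
    (htrans : ∀ x ∈ W, ∀ y ∈ W, ∀ z ∈ W, r x y → r y z → r x z) {x y : α} (hx : x ∈ W)
    (hy : y ∈ W) : r x y ↔ {z | z ∈ W ∧ r x z} = {z | z ∈ W ∧ r y z} := by
  constructor
  · intro hxy
    ext z
    exact ⟨fun ⟨hz, hxz⟩ => ⟨hz, htrans y hy x hx z hz (hsymm x hx y hy hxy) hxz⟩,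
      fun ⟨hz, hyz⟩ => ⟨hz, htrans x hx y hy z hz hxy hyz⟩⟩
  · intro hclass
    have hy' : y ∈ {z | z ∈ W ∧ r y z} := ⟨hy, hrefl y hy⟩
    rw [← hclass] at hy'
    exact hy'.2

namespace LocalGroup

variable {G : Type*} [TopologicalSpace G] {L : LocalGroup G}

theorem represents_singleton_iff {a b : G} : L.Represents [a] b ↔ b = a := by
  rw [Represents]

theorem Represents.exists_split {l : List G} {b : G} (h : L.Represents l b) {i : ℕ}
    (hi : 1 ≤ i) (hil : i < l.length) :
    ∃ b₁ b₂, L.Represents (l.take i) b₁ ∧ L.Represents (l.drop i) b₂ ∧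
      (b₁, b₂) ∈ L.Omega ∧ L.mul b₁ b₂ = b := by
  match l, h with
  | [], _ => simp at hil
  | [_], _ => simp at hil; omega
  | _ :: _ :: _, h =>
    rw [Represents] at h
    exact h i hi hil

theorem represents_pair_iff {a c b : G} :
    L.Represents [a, c] b ↔ (a, c) ∈ L.Omega ∧ L.mul a c = b := by
  constructor
  · intro h
    obtain ⟨b₁, b₂, h₁, h₂, hΩ, rfl⟩ := h.exists_split le_rfl (by simp)
    simp only [List.take, List.drop, represents_singleton_iff] at h₁ h₂
    subst h₁ h₂
    exact ⟨hΩ, rfl⟩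
  · rintro ⟨hΩ, rfl⟩
    rw [Represents]
    intro i hi hil
    obtain rfl : i = 1 := by simp at hil; omega
    exact ⟨a, c, represents_singleton_iff.2 rfl, represents_singleton_iff.2 rfl, hΩ, rfl⟩

theorem Represents.triple {a c d b : G} (h : L.Represents [a, c, d] b) :
    (a, L.mul c d) ∈ L.Omega ∧ L.mul a (L.mul c d) = b ∧ L.mul (L.mul a c) d = b := by
  obtain ⟨b₁, b₂, h₁, h₂, hΩ, rfl⟩ := h.exists_split le_rfl (by simp)
  obtain ⟨c₁, c₂, g₁, g₂, -, hb⟩ := h.exists_split (i := 2) (by omega) (by simp)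
  simp only [List.take, List.drop, represents_singleton_iff, represents_pair_iff]
    at h₁ h₂ g₁ g₂
  obtain ⟨-, rfl⟩ := h₂
  obtain ⟨-, rfl⟩ := g₁
  subst h₁ g₂
  exact ⟨hΩ, rfl, hb⟩

theorem Represents.append_one : ∀ {l : List G} {b : G}, L.Represents l b → l ≠ [] →
    L.Represents (l ++ [L.one]) b
  | [a], b, h, _ => by
    rw [represents_singleton_iff.1 h]
    exact represents_pair_iff.2 ⟨L.pair_one_right a, L.mul_one a⟩
  | a :: c :: l, b, h, _ => by
    rw [List.cons_append, List.cons_append, Represents]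
    intro i hi hil
    simp only [List.length_cons, List.length_append, List.length_nil] at hil
    rcases Nat.lt_or_ge i (l.length + 2) with hlt | hge
    · obtain ⟨b₁, b₂, h₁, h₂, hΩ, hb⟩ := h.exists_split hi (by simp; omega)
      have hne : (a :: c :: l).drop i ≠ [] := by simp; omega
      refine ⟨b₁, b₂, ?_, ?_, hΩ, hb⟩
      · rwa [← List.cons_append, ← List.cons_append,
          List.take_append_of_le_length (by simp; omega)]
      · rw [← List.cons_append, ← List.cons_append,
          List.drop_append_of_le_length (by simp; omega)]
        exact h₂.append_one hne
    · obtain rfl : i = (a :: c :: l).length := by simp; omega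
      refine ⟨b, L.one, ?_, ?_, L.pair_one_right b, L.mul_one b⟩
      · rwa [← List.cons_append, ← List.cons_append, List.take_left]
      · rw [← List.cons_append, ← List.cons_append, List.drop_left]
        exact represents_singleton_iff.2 rfl
termination_by l => l.length
decreasing_by simp; omega

theorem setPow_subset_setPow_succ {A : Set G} (h1 : L.one ∈ A) (n : ℕ) :
    L.setPow A n ⊆ L.setPow A (n + 1) := by
  rintro b ⟨l, rfl, hlA, hb⟩
  refine ⟨l ++ [L.one], by simp, fun a ha => ?_, ?_⟩
  · rcases List.mem_append.1 ha with ha | ha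
    exacts [hlA a ha, List.mem_singleton.1 ha ▸ h1]
  rcases l with _ | ⟨a, l⟩
  · rw [Represents] at hb
    exact represents_singleton_iff.2 hb
  · exact hb.append_one (List.cons_ne_nil a l)

theorem setPow_mono {A : Set G} (h1 : L.one ∈ A) {m n : ℕ} (hmn : m ≤ n) :
    L.setPow A m ⊆ L.setPow A n := by
  induction n, hmn using Nat.le_induction with
  | base => exact subset_rfl
  | succ n _ ih => exact ih.trans (setPow_subset_setPow_succ h1 n)

theorem IsProdChain.subset_of_le {U : ℕ → Set G} (hU : L.IsProdChain U) {m n : ℕ}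
    (hm : 1 ≤ m) (hmn : m ≤ n) : U n ⊆ U m := by
  induction n, hmn using Nat.le_induction with
  | base => exact subset_rfl
  | succ n hmn ih => exact ((hU n (hm.trans hmn)).2.2.2.1).trans ih

theorem IsProdChain.exists_represents {U : ℕ → Set G} (hU : L.IsProdChain U) {n : ℕ}
    {l : List G} (hl : l ≠ []) (hln : l.length ≤ n) (hlU : ∀ a ∈ l, a ∈ U n) :
    ∃ b, L.Represents l b :=
  have hl1 : 1 ≤ l.length := List.length_pos_iff.2 hl
  (hU l.length hl1).2.2.2.2 l rfl fun a ha => hU.subset_of_le hl1 hln (hlU a ha)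

theorem IsProdChain.exists_represents_mem {U : ℕ → Set G} (hU : L.IsProdChain U)
    {A V : Set G} {n : ℕ} (h1 : L.one ∈ A) (hAU : A ⊆ U n) (hAV : L.setPow A n ⊆ V)
    {l : List G} (hl : l ≠ []) (hln : l.length ≤ n) (hlA : ∀ a ∈ l, a ∈ A) :
    ∃ b, L.Represents l b ∧ b ∈ V :=
  have ⟨b, hb⟩ := hU.exists_represents hl hln fun a ha => hAU (hlA a ha)
  ⟨b, hb, hAV (setPow_mono h1 hln ⟨l, rfl, hlA, hb⟩)⟩

theorem inv_inv_of_mem {a : G} (ha : a ∈ L.Lambda) (ha' : L.inv a ∈ L.Lambda) :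
    L.inv (L.inv a) = a := by
  have h := L.assoc a (L.inv a) (L.inv (L.inv a)) (L.mem_inv_right a ha)
    (L.mem_inv_right _ ha') (by rw [L.mul_inv_self a ha]; exact L.pair_one_left _)
    (by rw [L.mul_inv_self _ ha']; exact L.pair_one_right a)
  rwa [L.mul_inv_self a ha, L.one_mul, L.mul_inv_self _ ha', L.mul_one] at h

theorem mul_inv_mul_of_represents {x z b : G} (hx : x ∈ L.Lambda)
    (hb : L.Represents [x, L.inv x, z] b) :
    (x, L.mul (L.inv x) z) ∈ L.Omega ∧ L.mul x (L.mul (L.inv x) z) = z := by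
  obtain ⟨hΩ, hb₁, hb₂⟩ := hb.triple
  rw [L.mul_inv_self x hx, L.one_mul] at hb₂
  exact ⟨hΩ, hb₁.trans hb₂.symm⟩

theorem inv_mul_mul {x h : G} (hx : x ∈ L.Lambda) (hxh : (x, h) ∈ L.Omega)
    (hΩ : (L.inv x, L.mul x h) ∈ L.Omega) : L.mul (L.inv x) (L.mul x h) = h := by
  have h := L.assoc (L.inv x) x h (L.mem_inv_left x hx) hxh
    (by rw [L.inv_mul_self x hx]; exact L.pair_one_left h) hΩ
  rwa [L.inv_mul_self x hx, L.one_mul, eq_comm] at h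

theorem setOf_inv_mul_mem_eq {H W : Set G} {x : G} (hx : x ∈ L.Lambda)
    (hrep : ∀ z ∈ W, ∃ b, L.Represents [x, L.inv x, z] b)
    (hΩ : ∀ z ∈ W, (L.inv x, z) ∈ L.Omega) :
    {y | y ∈ W ∧ L.mul (L.inv x) y ∈ H} =
      {z | ∃ h ∈ H, (x, h) ∈ L.Omega ∧ L.mul x h = z} ∩ W := by
  ext z
  constructor
  · rintro ⟨hz, hxz⟩
    have ⟨_, hb⟩ := hrep z hz
    exact ⟨⟨_, hxz, mul_inv_mul_of_represents hx hb⟩, hz⟩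
  · rintro ⟨⟨h, hh, hxh, rfl⟩, hz⟩
    exact ⟨hz, (inv_mul_mul hx hxh (hΩ _ hz)).symm ▸ hh⟩

section SublocalGroup

variable {H V : Set G}

theorem IsSublocalGroup.inv_mul_mem_symm (hstd : L.Std) (hH : L.IsSublocalGroup H V)
    {x y : G} (hxy : (L.inv x, y) ∈ L.Omega) (hV : L.mul (L.inv y) x ∈ V)
    (h : L.mul (L.inv x) y ∈ H) : L.mul (L.inv y) x ∈ H := by
  obtain ⟨-, -, -, -, -, hinvH, -⟩ := hH
  have hΛ : ∀ g, g ∈ L.Lambda := fun g => hstd.1 ▸ Set.mem_univ g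
  have hinv : L.inv (L.mul (L.inv x) y) = L.mul (L.inv y) x := by
    rw [(hstd.2 _ _ hxy).2, inv_inv_of_mem (hΛ x) (hΛ _)]
  exact hinv ▸ hinvH _ h (hΛ _) (hinv ▸ hV)

theorem IsSublocalGroup.inv_mul_mem_trans (hH : L.IsSublocalGroup H V) {x y z b : G}
    (hy : y ∈ L.Lambda) (hb : L.Represents [L.inv x, y, L.inv y, z] b) (hbV : b ∈ V)
    (hxy : L.mul (L.inv x) y ∈ H) (hyz : L.mul (L.inv y) z ∈ H) :
    L.mul (L.inv x) z ∈ H := by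
  -- `b` is both `(x⁻¹y)(y⁻¹z) ∈ H` and `x⁻¹((yy⁻¹)z) = x⁻¹z`.
  obtain ⟨b₁, b₂, h₁, h₂, hΩ, rfl⟩ := hb.exists_split (i := 2) (by omega) (by simp)
  obtain ⟨c₁, c₂, g₁, g₂, -, hc⟩ := hb.exists_split le_rfl (by simp)
  simp only [List.take, List.drop, represents_singleton_iff, represents_pair_iff]
    at h₁ h₂ g₁ g₂
  obtain ⟨-, rfl⟩ := h₁
  obtain ⟨-, rfl⟩ := h₂
  obtain ⟨-, -, hc₂⟩ := g₂.triple
  rw [L.mul_inv_self y hy, L.one_mul] at hc₂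
  obtain ⟨-, -, -, -, -, -, hmulH⟩ := hH
  rw [hc₂, ← g₁, hc]
  exact hmulH _ hxy _ hyz hΩ hbV

end SublocalGroup

end LocalGroup

theorem statement_13_general {G : Type*} [TopologicalSpace G]
    (L : LocalGroup G) (hstd : L.Std) (Un : ℕ → Set G) (hUn : L.IsProdChain Un)
    (H V : Set G) (hHV : L.IsNormalSublocalGroup H V)
    (W : Set G) (h1W : L.one ∈ W) (hWsym : L.IsSymmetric W)
    (hW6 : W ⊆ Un 6) (hWpow : L.setPow W 6 ⊆ V) :
    (∀ x ∈ W, L.mul (L.inv x) x ∈ H) ∧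
      (∀ x ∈ W, ∀ y ∈ W, L.mul (L.inv x) y ∈ H → L.mul (L.inv y) x ∈ H) ∧
      (∀ x ∈ W, ∀ y ∈ W, ∀ z ∈ W, L.mul (L.inv x) y ∈ H → L.mul (L.inv y) z ∈ H →
        L.mul (L.inv x) z ∈ H) ∧
      (∀ x ∈ W, ∀ y ∈ W, (L.mul (L.inv x) y ∈ H ↔
        {z | ∃ h ∈ H, (x, h) ∈ L.Omega ∧ L.mul x h = z} ∩ W =
          {z | ∃ h ∈ H, (y, h) ∈ L.Omega ∧ L.mul y h = z} ∩ W)) ∧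
      ∀ x ∈ W, {y | y ∈ W ∧ L.mul (L.inv x) y ∈ H} =
        {z | ∃ h ∈ H, (x, h) ∈ L.Omega ∧ L.mul x h = z} ∩ W := by
  have hΛ : ∀ g, g ∈ L.Lambda := fun g => hstd.1 ▸ Set.mem_univ g
  have hinvW : ∀ a ∈ W, L.inv a ∈ W := fun a ha => hWsym.2 ▸ Set.mem_image_of_mem _ ha
  have hprod := fun {l} => hUn.exists_represents_mem (l := l) h1W hW6 hWpow
  have hpair : ∀ a ∈ W, ∀ c ∈ W, (a, c) ∈ L.Omega ∧ L.mul a c ∈ V := fun a ha c hc =>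
    have ⟨b, hb, hbV⟩ := hprod (l := [a, c]) (by simp) (by simp) (by simp [ha, hc])
    have ⟨hΩ, hab⟩ := represents_pair_iff.1 hb
    ⟨hΩ, hab ▸ hbV⟩
  have hH := hHV.1
  have hrefl : ∀ x ∈ W, L.mul (L.inv x) x ∈ H := fun x _ =>
    (L.inv_mul_self x (hΛ x)).symm ▸ hH.1
  have hsymm : ∀ x ∈ W, ∀ y ∈ W, L.mul (L.inv x) y ∈ H → L.mul (L.inv y) x ∈ H :=
    fun x hx y hy => hH.inv_mul_mem_symm hstd (hpair _ (hinvW x hx) y hy).1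
      (hpair _ (hinvW y hy) x hx).2
  have htrans : ∀ x ∈ W, ∀ y ∈ W, ∀ z ∈ W, L.mul (L.inv x) y ∈ H →
      L.mul (L.inv y) z ∈ H → L.mul (L.inv x) z ∈ H := fun x hx y hy z hz =>
    have ⟨_, hb, hbV⟩ := hprod (l := [L.inv x, y, L.inv y, z]) (by simp) (by simp)
      (by simp [hinvW x hx, hy, hinvW y hy, hz])
    hH.inv_mul_mem_trans (hΛ y) hb hbV
  have hclass : ∀ x ∈ W, {y | y ∈ W ∧ L.mul (L.inv x) y ∈ H} =
      {z | ∃ h ∈ H, (x, h) ∈ L.Omega ∧ L.mul x h = z} ∩ W := fun x hx =>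
    setOf_inv_mul_mem_eq (hΛ x)
      (fun z hz => (hprod (l := [x, L.inv x, z]) (by simp) (by simp)
        (by simp [hx, hinvW x hx, hz])).imp fun _ => And.left)
      (fun z hz => (hpair _ (hinvW x hx) z hz).1)
  refine ⟨hrefl, hsymm, htrans, fun x hx y hy => ?_, hclass⟩
  rw [← hclass x hx, ← hclass y hy]
  exact rel_iff_setOf_eq_setOf hrefl hsymm htrans hx hy

/-- the coset relation `E_H` is an equivalence relation on `W`, and its
classes are the local cosets `xH ∩ W`. -/
theorem statement_13 {G : Type*} [TopologicalSpace G] [T2Space G]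
    (L : LocalGroup G) (hstd : L.Std) (Un : ℕ → Set G) (hUn : L.IsProdChain Un)
    (H V : Set G) (hHV : L.IsNormalSublocalGroup H V)
    (W : Set G) (hWo : IsOpen W) (h1W : L.one ∈ W) (hWsym : L.IsSymmetric W)
    (hW6 : W ⊆ Un 6) (hWpow : L.setPow W 6 ⊆ V) :
    (∀ x ∈ W, L.mul (L.inv x) x ∈ H) ∧
      (∀ x ∈ W, ∀ y ∈ W, L.mul (L.inv x) y ∈ H → L.mul (L.inv y) x ∈ H) ∧
      (∀ x ∈ W, ∀ y ∈ W, ∀ z ∈ W, L.mul (L.inv x) y ∈ H → L.mul (L.inv y) z ∈ H →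
        L.mul (L.inv x) z ∈ H) ∧
      (∀ x ∈ W, ∀ y ∈ W, (L.mul (L.inv x) y ∈ H ↔
        {z | ∃ h ∈ H, (x, h) ∈ L.Omega ∧ L.mul x h = z} ∩ W =
          {z | ∃ h ∈ H, (y, h) ∈ L.Omega ∧ L.mul y h = z} ∩ W)) ∧
      ∀ x ∈ W, {y | y ∈ W ∧ L.mul (L.inv x) y ∈ H} =
        {z | ∃ h ∈ H, (x, h) ∈ L.Omega ∧ L.mul x h = z} ∩ W :=
  statement_13_general L hstd Un hUn H V hHV W h1W hWsym hW6 hWpow
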